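/- Let P₁, P₂, P₃ be elements of a complex Banach algebra satisfying the second-order condition [P₁,P₂] + [P₁,P₃] + [P₂,P₃] = 0, set 𝓛 = P₁ + P₂ + P₃ and E(t) = exp(tP₁)·exp(tP₂)·exp(tP₃) − exp(t𝓛). Then for every real t ≥ 0, E(t) = ∫₀ᵗ exp((t−τ)𝓛)·( ∫₀^τ exp((τ−η)P₁)·( ∫₀^η exp(ξP₁)·[P₁,[P₂,P₃]]·exp(−ξP₁) dξ )·exp(ηP₁) dη )·exp(τP₂)·exp(τP₃) dτ + ∫₀ᵗ exp((t−τ)𝓛)·( ∫₀^τ exp(τP₁)·( ∫₀^η exp(ξP₂)·[P₂,[P₂,P₃]]·exp(−ξP₂) dξ ) dη )·exp(τP₂)·exp(τP₃) dτ. -/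

import Mathlib

/-!
With `S τ = exp (τ P₁) exp (τ P₂) exp (τ P₃)`, variation of constants gives
`E t = ∫₀ᵗ exp ((t - τ) 𝓛) (S' τ - 𝓛 S τ) dτ`, and `S' τ - 𝓛 S τ = exp (τ P₁) K τ exp (τ P₂) exp (τ P₃)`
with `K τ = P₂ + exp (τ P₂) P₃ exp (-τ P₂) - exp (-τ P₁) (P₂ + P₃) exp (τ P₁)`. Now `K 0 = 0`, and the
second-order condition `[P₁, P₂ + P₃] = -[P₂, P₃]` turns `K'` into a sum of two differences of
conjugates of `C = [P₂, P₃]`. Each such difference is again an integral, since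
`d/dξ (exp (ξ A) B exp (-ξ A)) = exp (ξ A) [A, B] exp (-ξ A)`; this produces the two triple integrals.
-/
open NormedSpace

section Exponential

variable {𝔸 : Type*} [NormedRing 𝔸] [NormedAlgebra ℝ 𝔸] [CompleteSpace 𝔸]

-- `exp_add_of_commute` and `exp_continuous` are stated for normed `ℚ`-algebras.
noncomputable instance : NormedAlgebra ℚ 𝔸 := .restrictScalars ℚ ℝ 𝔸

theorem exp_smul_mul_exp_neg_smul (A : 𝔸) (s : ℝ) : exp (s • A) * exp ((-s) • A) = 1 := by
  rw [← exp_add_of_commute (((Commute.refl A).smul_left s).smul_right (-s)), ← add_smul,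
    add_neg_cancel, zero_smul, exp_zero]

theorem exp_neg_smul_mul_exp_smul (A : 𝔸) (s : ℝ) : exp ((-s) • A) * exp (s • A) = 1 := by
  simpa using exp_smul_mul_exp_neg_smul A (-s)

theorem exp_sub_smul (A : 𝔸) (a b : ℝ) : exp ((a - b) • A) = exp (a • A) * exp ((-b) • A) := by
  rw [← exp_add_of_commute (((Commute.refl A).smul_left a).smul_right (-b)), ← add_smul,
    sub_eq_add_neg]

theorem hasDerivAt_exp_neg_smul (A : 𝔸) (s : ℝ) :
    HasDerivAt (fun u : ℝ => exp ((-u) • A)) (-(exp ((-s) • A) * A)) s := by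
  simpa [Function.comp_def] using (hasDerivAt_exp_smul_const A (-s)).scomp s (hasDerivAt_neg s)

theorem hasDerivAt_conj_exp_smul (A B : 𝔸) (s : ℝ) :
    HasDerivAt (fun u : ℝ => exp (u • A) * B * exp ((-u) • A))
      (exp (s • A) * (A * B - B * A) * exp ((-s) • A)) s := by
  have hA : exp ((-s) • A) * A = A * exp ((-s) • A) :=
    ((Commute.refl A).smul_right (-s)).exp_right.eq.symm
  refine (((hasDerivAt_exp_smul_const A s).mul_const B).mul
    (hasDerivAt_exp_neg_smul A s)).congr_deriv ?_
  rw [hA]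
  noncomm_ring

theorem hasDerivAt_conj_exp_neg_smul (A B : 𝔸) (s : ℝ) :
    HasDerivAt (fun u : ℝ => exp ((-u) • A) * B * exp (u • A))
      (-(exp ((-s) • A) * (A * B - B * A) * exp (s • A))) s := by
  simpa [Function.comp_def] using (hasDerivAt_conj_exp_smul A B (-s)).scomp s (hasDerivAt_neg s)

theorem integral_conj_exp_smul_commutator (A B : 𝔸) (η : ℝ) :
    ∫ ξ in (0 : ℝ)..η, exp (ξ • A) * (A * B - B * A) * exp ((-ξ) • A)
      = exp (η • A) * B * exp ((-η) • A) - B := by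
  rw [intervalIntegral.integral_eq_sub_of_hasDerivAt (fun ξ _ => hasDerivAt_conj_exp_smul A B ξ)
    (Continuous.intervalIntegrable (by fun_prop) _ _)]
  simp

theorem integral_const_mul_of_intervalIntegrable (c : 𝔸) {f : ℝ → 𝔸} {a b : ℝ}
    (hf : IntervalIntegrable f MeasureTheory.volume a b) :
    ∫ x in a..b, c * f x = c * ∫ x in a..b, f x :=
  (ContinuousLinearMap.mul ℝ 𝔸 c).intervalIntegral_comp_comm hf

theorem integral_exp_sub_smul_mul_integral_conj_exp_smul_commutator (A B : 𝔸) (τ : ℝ) :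
    ∫ η in (0 : ℝ)..τ, exp ((τ - η) • A)
        * (∫ ξ in (0 : ℝ)..η, exp (ξ • A) * (A * B - B * A) * exp ((-ξ) • A)) * exp (η • A)
      = exp (τ • A) * ∫ η in (0 : ℝ)..τ, (B - exp ((-η) • A) * B * exp (η • A)) := by
  have hconj : ∀ η : ℝ, exp ((τ - η) • A) * (exp (η • A) * B * exp ((-η) • A) - B) * exp (η • A)
      = exp (τ • A) * (B - exp ((-η) • A) * B * exp (η • A)) := fun η => by
    calc _ = exp (τ • A) * ((exp ((-η) • A) * exp (η • A)) * B * (exp ((-η) • A) * exp (η • A))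
          - exp ((-η) • A) * B * exp (η • A)) := by rw [exp_sub_smul]; noncomm_ring
      _ = _ := by rw [exp_neg_smul_mul_exp_smul, one_mul, mul_one]
  simp only [integral_conj_exp_smul_commutator, hconj]
  exact integral_const_mul_of_intervalIntegrable _
    (Continuous.intervalIntegrable (by fun_prop) _ _)

theorem integral_const_mul_integral_conj_exp_smul_commutator (c A B : 𝔸) (τ : ℝ) :
    ∫ η in (0 : ℝ)..τ, c * ∫ ξ in (0 : ℝ)..η, exp (ξ • A) * (A * B - B * A) * exp ((-ξ) • A)
      = c * ∫ η in (0 : ℝ)..τ, (exp (η • A) * B * exp ((-η) • A) - B) := by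
  simp only [integral_conj_exp_smul_commutator]
  exact integral_const_mul_of_intervalIntegrable _
    (Continuous.intervalIntegrable (by fun_prop) _ _)

theorem integral_exp_sub_smul_mul_eq_sub (L : 𝔸) {S D : ℝ → 𝔸}
    (hS : ∀ τ, HasDerivAt S (L * S τ + D τ) τ) (hD : Continuous D) (t : ℝ) :
    ∫ τ in (0 : ℝ)..t, exp ((t - τ) • L) * D τ = S t - exp (t • L) * S 0 := by
  have hderiv : ∀ τ, HasDerivAt (fun u => exp ((-u) • L) * S u) (exp ((-τ) • L) * D τ) τ :=
    fun τ => ((hasDerivAt_exp_neg_smul L τ).mul (hS τ)).congr_deriv (by noncomm_ring)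
  have hint : IntervalIntegrable (fun τ => exp ((-τ) • L) * D τ) MeasureTheory.volume 0 t :=
    Continuous.intervalIntegrable (by fun_prop) _ _
  calc ∫ τ in (0 : ℝ)..t, exp ((t - τ) • L) * D τ
      = exp (t • L) * ∫ τ in (0 : ℝ)..t, exp ((-τ) • L) * D τ := by
        simp only [exp_sub_smul, mul_assoc]
        exact integral_const_mul_of_intervalIntegrable _ hint
    _ = S t - exp (t • L) * S 0 := by
        rw [intervalIntegral.integral_eq_sub_of_hasDerivAt (fun τ _ => hderiv τ) hint, mul_sub,
          ← mul_assoc, exp_smul_mul_exp_neg_smul]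
        simp

end Exponential

section Splitting

variable {𝔸 : Type*} [NormedRing 𝔸] [NormedAlgebra ℝ 𝔸] [CompleteSpace 𝔸]

-- `exp (-τ P₁) (S' τ - (P₁ + P₂ + P₃) S τ) exp (-τ P₃) exp (-τ P₂)` for the product
-- `S τ = exp (τ P₁) exp (τ P₂) exp (τ P₃)`.
noncomputable def splittingDefect (P₁ P₂ P₃ : 𝔸) (τ : ℝ) : 𝔸 :=
  P₂ + exp (τ • P₂) * P₃ * exp ((-τ) • P₂) - exp ((-τ) • P₁) * (P₂ + P₃) * exp (τ • P₁)

variable (P₁ P₂ P₃ : 𝔸)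

theorem hasDerivAt_splittingDefect (τ : ℝ) :
    HasDerivAt (splittingDefect P₁ P₂ P₃)
      (exp (τ • P₂) * (P₂ * P₃ - P₃ * P₂) * exp ((-τ) • P₂)
        + exp ((-τ) • P₁) * (P₁ * (P₂ + P₃) - (P₂ + P₃) * P₁) * exp (τ • P₁)) τ :=
  (((hasDerivAt_const τ P₂).add (hasDerivAt_conj_exp_smul P₂ P₃ τ)).sub
    (hasDerivAt_conj_exp_neg_smul P₁ (P₂ + P₃) τ)).congr_deriv (by noncomm_ring)

theorem hasDerivAt_exp_smul_mul_exp_smul_mul_exp_smul (τ : ℝ) :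
    HasDerivAt (fun u : ℝ => exp (u • P₁) * exp (u • P₂) * exp (u • P₃))
      ((P₁ + P₂ + P₃) * (exp (τ • P₁) * exp (τ • P₂) * exp (τ • P₃))
        + exp (τ • P₁) * splittingDefect P₁ P₂ P₃ τ * exp (τ • P₂) * exp (τ • P₃)) τ := by
  refine (((hasDerivAt_exp_smul_const' P₁ τ).mul (hasDerivAt_exp_smul_const' P₂ τ)).mul
    (hasDerivAt_exp_smul_const' P₃ τ)).congr_deriv ?_
  simp only [Pi.mul_apply]
  calc _ = (P₁ + P₂ + P₃) * (exp (τ • P₁) * exp (τ • P₂) * exp (τ • P₃))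
        + exp (τ • P₁) * P₂ * exp (τ • P₂) * exp (τ • P₃)
        + exp (τ • P₁) * exp (τ • P₂) * P₃ * (exp ((-τ) • P₂) * exp (τ • P₂)) * exp (τ • P₃)
        - (exp (τ • P₁) * exp ((-τ) • P₁)) * (P₂ + P₃) * exp (τ • P₁) * exp (τ • P₂)
          * exp (τ • P₃) := by
        rw [exp_smul_mul_exp_neg_smul, exp_neg_smul_mul_exp_smul]; noncomm_ring
    _ = _ := by simp only [splittingDefect]; noncomm_ring

theorem splittingDefect_eq_integral_add_integral
    (hcond : (P₁ * P₂ - P₂ * P₁) + (P₁ * P₃ - P₃ * P₁) + (P₂ * P₃ - P₃ * P₂) = 0) (τ : ℝ) :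
    splittingDefect P₁ P₂ P₃ τ
      = (∫ η in (0 : ℝ)..τ, ((P₂ * P₃ - P₃ * P₂)
          - exp ((-η) • P₁) * (P₂ * P₃ - P₃ * P₂) * exp (η • P₁)))
        + ∫ η in (0 : ℝ)..τ, (exp (η • P₂) * (P₂ * P₃ - P₃ * P₂) * exp ((-η) • P₂)
          - (P₂ * P₃ - P₃ * P₂)) := by
  have hcomm : P₁ * (P₂ + P₃) - (P₂ + P₃) * P₁ = -(P₂ * P₃ - P₃ * P₂) := by
    rw [← add_eq_zero_iff_eq_neg, ← hcond]; noncomm_ring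
  rw [← intervalIntegral.integral_add (Continuous.intervalIntegrable (by fun_prop) _ _)
      (Continuous.intervalIntegrable (by fun_prop) _ _),
    intervalIntegral.integral_eq_sub_of_hasDerivAt (fun η _ =>
      (hasDerivAt_splittingDefect P₁ P₂ P₃ η).congr_deriv (by rw [hcomm]; noncomm_ring))
      (Continuous.intervalIntegrable (by fun_prop) _ _)]
  simp [splittingDefect]

end Splitting

/-- Theorem 3.1, error formula: For `P₁, P₂, P₃` in a complex Banach algebra
satisfying `[P₁,P₂] + [P₁,P₃] + [P₂,P₃] = 0`, with `𝓛 = P₁ + P₂ + P₃` and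
`E(t) = exp(tP₁)exp(tP₂)exp(tP₃) − exp(t𝓛)`, for every `t ≥ 0`:
`E(t) = ∫₀ᵗ exp((t−τ)𝓛)·(∫₀^τ exp((τ−η)P₁)·(∫₀^η exp(ξP₁)[P₁,[P₂,P₃]]exp(−ξP₁) dξ)·exp(ηP₁) dη)·exp(τP₂)exp(τP₃) dτ
      + ∫₀ᵗ exp((t−τ)𝓛)·(∫₀^τ exp(τP₁)·(∫₀^η exp(ξP₂)[P₂,[P₂,P₃]]exp(−ξP₂) dξ) dη)·exp(τP₂)exp(τP₃) dτ`. -/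
theorem splitting_error_formula {𝒜 : Type*} [NormedRing 𝒜] [NormedAlgebra ℂ 𝒜]
    [CompleteSpace 𝒜] (P₁ P₂ P₃ : 𝒜) (𝓛 : 𝒜) (h𝓛 : 𝓛 = P₁ + P₂ + P₃)
    (hcond : (P₁ * P₂ - P₂ * P₁) + (P₁ * P₃ - P₃ * P₁) + (P₂ * P₃ - P₃ * P₂) = 0) :
    ∀ t : ℝ, 0 ≤ t →
      exp ((t : ℂ) • P₁) * exp ((t : ℂ) • P₂) * exp ((t : ℂ) • P₃) - exp ((t : ℂ) • 𝓛)
      = (∫ τ in (0 : ℝ)..t, exp (((t - τ : ℝ) : ℂ) • 𝓛)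
            * (∫ η in (0 : ℝ)..τ, exp (((τ - η : ℝ) : ℂ) • P₁)
                * (∫ ξ in (0 : ℝ)..η, exp ((ξ : ℂ) • P₁)
                    * (P₁ * (P₂ * P₃ - P₃ * P₂) - (P₂ * P₃ - P₃ * P₂) * P₁)
                    * exp (-((ξ : ℂ) • P₁)))
                * exp ((η : ℂ) • P₁))
            * exp ((τ : ℂ) • P₂) * exp ((τ : ℂ) • P₃))
        + ∫ τ in (0 : ℝ)..t, exp (((t - τ : ℝ) : ℂ) • 𝓛)
            * (∫ η in (0 : ℝ)..τ, exp ((τ : ℂ) • P₁)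
                * ∫ ξ in (0 : ℝ)..η, exp ((ξ : ℂ) • P₂)
                    * (P₂ * (P₂ * P₃ - P₃ * P₂) - (P₂ * P₃ - P₃ * P₂) * P₂)
                    * exp (-((ξ : ℂ) • P₂)))
            * exp ((τ : ℂ) • P₂) * exp ((τ : ℂ) • P₃) := by
  intro t _
  subst h𝓛
  have hE := integral_exp_sub_smul_mul_eq_sub (P₁ + P₂ + P₃)
    (hasDerivAt_exp_smul_mul_exp_smul_mul_exp_smul P₁ P₂ P₃)
    (by unfold splittingDefect; fun_prop) t
  simp only [zero_smul, exp_zero, mul_one] at hE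
  simp only [Complex.coe_smul, ← neg_smul,
    integral_exp_sub_smul_mul_integral_conj_exp_smul_commutator,
    integral_const_mul_integral_conj_exp_smul_commutator]
  rw [← hE, ← intervalIntegral.integral_add (Continuous.intervalIntegrable (by fun_prop) _ _)
    (Continuous.intervalIntegrable (by fun_prop) _ _)]
  refine intervalIntegral.integral_congr fun τ _ => ?_
  simp only [splittingDefect_eq_integral_add_integral P₁ P₂ P₃ hcond]
  noncomm_ring
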